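/- Let τ ∈ (0,1) and κ = min(τ, 1−τ). Let λ > 0, μ ≥ 0 and let p: ℝ → ℝ be μ-amenable with parameter λ; set P(v) = Σ_{j=1}^d p(v_j). Let Σ be a d×d real symmetric matrix with κ·λ_min(Σ) > 3μ/4, let X be an n×d real matrix with n ≥ 1, and set Σ̂ = (1/n)XᵀX. Let β*, β̂ ∈ ℝ^d with ‖β*‖₁ ≤ R, ‖β̂‖₁ ≤ R, and suppose β* has at most s ≥ 1 nonzero coordinates. Write Δ = β̂ − β* and assume: (H1) κ·ΔᵀΣ̂Δ ≤ z‖Δ‖₁ + P(β*) − P(β̂) + (μ/2)‖Δ‖₂² for some z ≥ 0; (H2) λ ≥ 4z; (H3) λ ≥ 8R·‖Σ̂ − Σ‖_max. Then ‖Δ‖₂ ≤ 6√s·λ / (4κ·λ_min(Σ) − 3μ) and ‖Δ‖₁ ≤ 4√s·‖Δ‖₂. (This is the deterministic core of Proposition 1: on the event where (H1)–(H3) hold, the ℓ² and ℓ¹ estimation errors of the regularized expectile estimator obey these bounds.) -/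

import Mathlib

/-!
Write `Δ = β̂ - β*` and let `S` be the support of `β*`. Since `‖Δ‖₁ ≤ 2R`, replacing `Σ̂` by `Σ`
in the quadratic form costs at most `κ ‖Σ̂ - Σ‖_max ‖Δ‖₁² ≤ λ ‖Δ‖₁ / 8`, and `Σ` has curvature
`λ_min(Σ)`. An amenable penalty satisfies `λ|t| - μt²/2 ≤ p t ≤ λ|t|` and `p a - p b ≤ λ|a - b|`,
so `P(β*) - P(β̂) ≤ λ ‖Δ_S‖₁ - ∑_{j ∉ S} p(Δ_j)`. With (H1) and (H2) this leaves one inequality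
between the ℓ¹ and squared ℓ² norms of `Δ` on and off `S`, in which each `p(Δ_j)` off `S` may be
replaced by `w (λ|Δ_j| - μΔ_j²/2)` for any `w ∈ [0, 1]`. Together with `‖Δ_S‖₁ ≤ √s ‖Δ_S‖₂`,
the choice `w = 1/2` gives the ℓ² bound, and `w = 3/8` and `w = 1` give the ℓ¹ bound.
-/

open Matrix

/-- A scalar penalty `p` is `μ`-amenable with parameter `λ > 0`. -/
def IsAmenable (lam mu : ℝ) (p : ℝ → ℝ) : Prop :=
  (∀ t : ℝ, p (-t) = p t) ∧
  p 0 = 0 ∧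
  MonotoneOn p (Set.Ici 0) ∧
  AntitoneOn (fun t => p t / t) (Set.Ioi 0) ∧
  (∀ t : ℝ, t ≠ 0 → DifferentiableAt ℝ p t) ∧
  Filter.Tendsto (fun t => deriv p t) (nhdsWithin 0 (Set.Ioi 0)) (nhds lam) ∧
  ConvexOn ℝ Set.univ (fun t => p t + mu / 2 * t ^ 2)

open Filter Topology Set Finset

theorem tendsto_apply_div_of_tendsto_deriv {f : ℝ → ℝ} {l : ℝ} (hf0 : f 0 = 0)
    (hf : ContinuousWithinAt f (Ioi 0) 0) (hdiff : DifferentiableOn ℝ f (Ioi 0))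
    (hderiv : Tendsto (deriv f) (𝓝[>] 0) (𝓝 l)) :
    Tendsto (fun t => f t / t) (𝓝[>] 0) (𝓝 l) := by
  have := hasDerivWithinAt_iff_tendsto_slope.mp
    (hasDerivWithinAt_Ici_of_tendsto_deriv hdiff hf self_mem_nhdsWithin hderiv)
  rw [Ici_sdiff_left] at this
  refine this.congr fun t => ?_
  simp [slope_def_field, hf0]

theorem le_mul_of_antitoneOn_div {f : ℝ → ℝ} {l t : ℝ}
    (hanti : AntitoneOn (fun t => f t / t) (Ioi 0))
    (hlim : Tendsto (fun t => f t / t) (𝓝[>] 0) (𝓝 l)) (ht : 0 < t) : f t ≤ l * t := by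
  have : f t / t ≤ l := ge_of_tendsto hlim <| mem_of_superset (Ioo_mem_nhdsGT ht)
    fun s hs => hanti hs.1 ht hs.2.le
  rwa [div_le_iff₀ ht] at this

theorem ConvexOn.mul_le_of_tendsto_div {f : ℝ → ℝ} {l t : ℝ} (hf : ConvexOn ℝ (Ici 0) f)
    (hf0 : f 0 = 0) (hlim : Tendsto (fun t => f t / t) (𝓝[>] 0) (𝓝 l)) (ht : 0 < t) :
    l * t ≤ f t := by
  have : l ≤ f t / t := le_of_tendsto hlim <| mem_of_superset (Ioo_mem_nhdsGT ht)
    fun s hs => by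
      simpa [hf0] using hf.secant_mono self_mem_Ici hs.1.le ht.le hs.1.ne' ht.ne' hs.2.le
  rwa [le_div_iff₀ ht] at this

theorem add_le_of_antitoneOn_div {f : ℝ → ℝ} (hf0 : f 0 = 0)
    (hanti : AntitoneOn (fun t => f t / t) (Ioi 0)) {x y : ℝ} (hx : 0 ≤ x) (hy : 0 ≤ y) :
    f (x + y) ≤ f x + f y := by
  rcases hx.eq_or_lt with rfl | hx
  · simp [hf0]
  rcases hy.eq_or_lt with rfl | hy
  · simp [hf0]
  have hxy : 0 < x + y := add_pos hx hy
  have hxs : f (x + y) / (x + y) ≤ f x / x := hanti hx hxy (le_add_of_nonneg_right hy.le)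
  have hys : f (x + y) / (x + y) ≤ f y / y := hanti hy hxy (le_add_of_nonneg_left hx.le)
  calc f (x + y) = x * (f (x + y) / (x + y)) + y * (f (x + y) / (x + y)) := by field_simp
    _ ≤ x * (f x / x) + y * (f y / y) := by gcongr
    _ = f x + f y := by field_simp

namespace IsAmenable

variable {lam mu : ℝ} {p : ℝ → ℝ}

theorem apply_abs (hp : IsAmenable lam mu p) (t : ℝ) : p |t| = p t := by
  have ⟨heven, _⟩ := hp
  rcases abs_choice t with h | h <;> simp only [h, heven]

theorem continuous (hp : IsAmenable lam mu p) : Continuous p := by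
  have ⟨_, _, _, _, _, _, hconv⟩ := hp
  have hq : Continuous fun t => p t + mu / 2 * t ^ 2 :=
    continuousOn_univ.mp (hconv.continuousOn isOpen_univ)
  exact (hq.sub (by fun_prop : Continuous fun t : ℝ => mu / 2 * t ^ 2)).congr fun t => by simp

theorem tendsto_apply_div (hp : IsAmenable lam mu p) :
    Tendsto (fun t => p t / t) (𝓝[>] 0) (𝓝 lam) := by
  have ⟨_, h0, _, _, hdiff, hderiv, _⟩ := hp
  exact tendsto_apply_div_of_tendsto_deriv h0 hp.continuous.continuousWithinAt
    (fun t ht => (hdiff t (ne_of_gt ht)).differentiableWithinAt) hderiv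

theorem le_mul_abs (hp : IsAmenable lam mu p) (t : ℝ) : p t ≤ lam * |t| := by
  have ⟨_, h0, _, hanti, _⟩ := hp
  rw [← hp.apply_abs]
  rcases (abs_nonneg t).eq_or_lt with h | h
  · rw [← h, h0, mul_zero]
  · simpa [abs_of_pos h] using le_mul_of_antitoneOn_div hanti hp.tendsto_apply_div h

theorem mul_abs_sub_le (hp : IsAmenable lam mu p) (t : ℝ) :
    lam * |t| - mu / 2 * t ^ 2 ≤ p t := by
  have ⟨_, h0, _, _, _, _, hconv⟩ := hp
  set q : ℝ → ℝ := fun t => p t + mu / 2 * t ^ 2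
  have hq : Tendsto (fun t => q t / t) (𝓝[>] 0) (𝓝 lam) := by
    have hlin : Tendsto (fun t : ℝ => mu / 2 * t) (𝓝[>] 0) (𝓝 0) :=
      ((by fun_prop : Continuous fun t : ℝ => mu / 2 * t).tendsto' 0 0 (by simp)).mono_left
        nhdsWithin_le_nhds
    have h := hp.tendsto_apply_div.add hlin
    rw [add_zero] at h
    refine h.congr' ?_
    filter_upwards [self_mem_nhdsWithin] with t (ht : 0 < t)
    simp only [q]
    field_simp
  have hq0 : q 0 = 0 := by simp [q, h0]
  have hqconv : ConvexOn ℝ (Ici 0) q := hconv.subset (subset_univ _) (convex_Ici 0)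
  rw [← hp.apply_abs, ← sq_abs]
  rcases (abs_nonneg t).eq_or_lt with h | h
  · simp [← h, h0]
  · have := hqconv.mul_le_of_tendsto_div hq0 hq h
    simp only [q] at this
    linarith

theorem nonneg (hp : IsAmenable lam mu p) (t : ℝ) : 0 ≤ p t := by
  have ⟨_, h0, hmono, _⟩ := hp
  rw [← hp.apply_abs, ← h0]
  exact hmono self_mem_Ici (abs_nonneg t) (abs_nonneg t)

theorem sub_le_mul_abs_sub (hp : IsAmenable lam mu p) (a b : ℝ) :
    p a - p b ≤ lam * |a - b| := by
  have ⟨_, h0, hmono, hanti, _⟩ := hp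
  have hle : p |a| ≤ p (|b| + |a - b|) :=
    hmono (abs_nonneg a) (add_nonneg (abs_nonneg b) (abs_nonneg _))
      (by linarith [abs_sub_abs_le_abs_sub a b])
  have hsub := add_le_of_antitoneOn_div h0 hanti (abs_nonneg b) (abs_nonneg (a - b))
  rw [hp.apply_abs] at hle
  rw [hp.apply_abs, hp.apply_abs] at hsub
  linarith [hp.le_mul_abs (a - b)]

theorem mul_le (hp : IsAmenable lam mu p) {w : ℝ} (hw : w ∈ Icc (0 : ℝ) 1) (t : ℝ) :
    w * (lam * |t| - mu / 2 * t ^ 2) ≤ p t := by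
  nlinarith [hp.mul_abs_sub_le t, hp.nonneg t, hw.1, hw.2]

theorem sum_sub_sum_le (hp : IsAmenable lam mu p) {ι : Type*} [Fintype ι] [DecidableEq ι]
    {S : Finset ι} {βstar : ι → ℝ} (hS : ∀ j ∉ S, βstar j = 0) (βhat : ι → ℝ) :
    ∑ j, p (βstar j) - ∑ j, p (βhat j)
      ≤ lam * ∑ j ∈ S, |βhat j - βstar j| - ∑ j ∈ Sᶜ, p (βhat j - βstar j) := by
  have ⟨_, h0, _⟩ := hp
  have hoff : ∑ j ∈ Sᶜ, (p (βstar j) - p (βhat j)) = -∑ j ∈ Sᶜ, p (βhat j - βstar j) := by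
    rw [← sum_neg_distrib]
    refine sum_congr rfl fun j hj => ?_
    rw [hS j (mem_compl.mp hj), h0, sub_zero, zero_sub]
  have hon : ∑ j ∈ S, (p (βstar j) - p (βhat j)) ≤ lam * ∑ j ∈ S, |βhat j - βstar j| := by
    rw [mul_sum]
    exact sum_le_sum fun j _ => abs_sub_comm (βhat j) (βstar j) ▸ hp.sub_le_mul_abs_sub _ _
  rw [← sum_sub_distrib, ← sum_add_sum_compl S, hoff]
  linarith

end IsAmenable

theorem sum_abs_le_sqrt_card_mul_sqrt_sum_sq {ι : Type*} (S : Finset ι) (x : ι → ℝ) :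
    ∑ j ∈ S, |x j| ≤ √(#S : ℝ) * √(∑ j ∈ S, x j ^ 2) := by
  rw [← Real.sqrt_mul (Nat.cast_nonneg _)]
  apply Real.le_sqrt_of_sq_le
  simpa only [sq_abs] using sq_sum_le_card_mul_sum_sq (s := S) (f := fun j => |x j|)

theorem abs_dotProduct_mulVec_le {ι : Type*} [Fintype ι] {M : Matrix ι ι ℝ} {e : ℝ}
    (hM : ∀ i j, |M i j| ≤ e) (x : ι → ℝ) : |x ⬝ᵥ (M *ᵥ x)| ≤ e * (∑ j, |x j|) ^ 2 := by
  have hexp : x ⬝ᵥ (M *ᵥ x) = ∑ i, ∑ j, x i * M i j * x j := by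
    simp only [dotProduct, mulVec, mul_sum, mul_assoc]
  calc |x ⬝ᵥ (M *ᵥ x)| ≤ ∑ i, ∑ j, |x i| * e * |x j| := by
        rw [hexp]
        refine (abs_sum_le_sum_abs _ _).trans (sum_le_sum fun i _ => ?_)
        refine (abs_sum_le_sum_abs _ _).trans (sum_le_sum fun j _ => ?_)
        rw [abs_mul, abs_mul]
        gcongr
        exact hM i j
    _ = e * (∑ j, |x j|) ^ 2 := by
        rw [sq, sum_mul_sum, mul_sum]
        exact sum_congr rfl fun i _ => by rw [mul_sum]; exact sum_congr rfl fun j _ => by ring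

open scoped MatrixOrder in
theorem Matrix.IsHermitian.iInf_eigenvalues_mul_le_dotProduct {ι : Type*} [Fintype ι]
    [DecidableEq ι] {A : Matrix ι ι ℝ} (hA : A.IsHermitian) (x : ι → ℝ) :
    (⨅ i, hA.eigenvalues i) * (x ⬝ᵥ x) ≤ x ⬝ᵥ (A *ᵥ x) := by
  have hle : algebraMap ℝ (Matrix ι ι ℝ) (⨅ i, hA.eigenvalues i) ≤ A := by
    rw [algebraMap_le_iff_le_spectrum (ha := hA.isSelfAdjoint),
      hA.spectrum_real_eq_range_eigenvalues]
    rintro _ ⟨i, rfl⟩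
    exact ciInf_le (Set.finite_range _).bddBelow i
  simpa [Algebra.algebraMap_eq_smul_one, sub_mulVec, smul_mulVec, dotProduct_sub,
    dotProduct_smul] using (Matrix.le_iff.mp hle).dotProduct_mulVec_nonneg x

theorem Matrix.IsHermitian.mul_iInf_eigenvalues_mul_sum_sq_le {ι : Type*} [Fintype ι]
    [DecidableEq ι] {Sig Sighat : Matrix ι ι ℝ} (hSig : Sig.IsHermitian) {k e R lam : ℝ}
    (hk0 : 0 ≤ k) (hk : k ≤ 1 / 2) (he0 : 0 ≤ e) (he : ∀ i j, |Sighat i j - Sig i j| ≤ e)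
    (hlam : 8 * R * e ≤ lam) {x : ι → ℝ} (hx : ∑ j, |x j| ≤ 2 * R) :
    k * (⨅ i, hSig.eigenvalues i) * ∑ j, x j ^ 2
      ≤ k * (x ⬝ᵥ (Sighat *ᵥ x)) + lam / 8 * ∑ j, |x j| := by
  set L := ∑ j, |x j|
  have hL : 0 ≤ L := sum_nonneg fun j _ => abs_nonneg _
  have hpert : x ⬝ᵥ (Sig *ᵥ x) ≤ x ⬝ᵥ (Sighat *ᵥ x) + e * L ^ 2 := by
    have := abs_dotProduct_mulVec_le (M := Sig - Sighat)
      (fun i j => by rw [sub_apply, abs_sub_comm]; exact he i j) x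
    rw [sub_mulVec, dotProduct_sub] at this
    linarith [le_abs_self (x ⬝ᵥ (Sig *ᵥ x) - x ⬝ᵥ (Sighat *ᵥ x))]
  have hslack : k * (e * L ^ 2) ≤ lam / 8 * L := by
    have hkL : k * L ≤ R := by nlinarith
    nlinarith [mul_nonneg he0 hL]
  calc k * (⨅ i, hSig.eigenvalues i) * ∑ j, x j ^ 2
      = k * ((⨅ i, hSig.eigenvalues i) * (x ⬝ᵥ x)) := by simp only [dotProduct, sq, mul_assoc]
    _ ≤ k * (x ⬝ᵥ (Sig *ᵥ x)) := by gcongr; exact hSig.iInf_eigenvalues_mul_le_dotProduct x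
    _ ≤ k * (x ⬝ᵥ (Sighat *ᵥ x)) + lam / 8 * L := by nlinarith

section BasicInequality

variable {lam mu c A B U V sq : ℝ}

theorem sqrt_add_le_of_basic_ineq (hlam : 0 ≤ lam) (hmu : 0 ≤ mu) (hc : 3 * mu / 4 < c)
    (hsq : 0 ≤ sq) (hB : 0 ≤ B) (hU : 0 ≤ U) (hV : 0 ≤ V) (hA : A ≤ sq * √U)
    (hM : ∀ w ∈ Icc (0 : ℝ) 1, c * (U + V) + w * (lam * B - mu / 2 * V)
      ≤ 3 * lam / 8 * (A + B) + lam * A + mu / 2 * (U + V)) :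
    √(U + V) ≤ 6 * sq * lam / (4 * c - 3 * mu) := by
  set r := √(U + V)
  have hr : 0 ≤ r := Real.sqrt_nonneg _
  have hr2 : r ^ 2 = U + V := Real.sq_sqrt (add_nonneg hU hV)
  have hur : √U ≤ r := Real.sqrt_le_sqrt (by linarith)
  have hhalf := hM (1 / 2) ⟨by norm_num, by norm_num⟩
  have hquad : (4 * c - 3 * mu) * r ^ 2 ≤ 11 / 2 * lam * sq * r := by
    nlinarith [mul_le_mul_of_nonneg_left hA hlam,
      mul_le_mul_of_nonneg_left hur (mul_nonneg hlam hsq), mul_nonneg hlam hB, mul_nonneg hmu hU]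
  rw [le_div_iff₀ (by linarith)]
  nlinarith [mul_nonneg hlam hsq]

theorem add_le_of_basic_ineq (hlam : 0 < lam) (hmu : 0 ≤ mu) (hc : 3 * mu / 4 ≤ c)
    (hsq : 0 ≤ sq) (hU : 0 ≤ U) (hV : 0 ≤ V) (hA : A ≤ sq * √U)
    (hM : ∀ w ∈ Icc (0 : ℝ) 1, c * (U + V) + w * (lam * B - mu / 2 * V)
      ≤ 3 * lam / 8 * (A + B) + lam * A + mu / 2 * (U + V)) :
    A + B ≤ 4 * sq * √(U + V) := by
  set u := √U
  set v := √V
  have hu : 0 ≤ u := Real.sqrt_nonneg _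
  have hv : 0 ≤ v := Real.sqrt_nonneg _
  have hu2 : u ^ 2 = U := Real.sq_sqrt hU
  have hv2 : v ^ 2 = V := Real.sq_sqrt hV
  have hcurv : 3 * mu / 4 * (U + V) ≤ c * (U + V) := by nlinarith
  have hA' : lam * A ≤ lam * sq * u := by nlinarith
  -- at `w = 3/8` the `B` terms cancel, which is what bounds `mu * v` by a multiple of `lam * sq`
  have h38 := hM (3 / 8) ⟨by norm_num, by norm_num⟩
  have h1 := hM 1 ⟨by norm_num, by norm_num⟩
  have hmuV : mu * V ≤ 22 * lam * sq * u - 4 * mu * U := by linarith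
  have hmuv : mu * v ≤ 11 / 2 * (lam * sq) := by
    have : (mu * v) ^ 2 ≤ (11 / 2 * (lam * sq)) ^ 2 :=
      calc (mu * v) ^ 2 = mu * (mu * V) := by rw [← hv2]; ring
        _ ≤ mu * (22 * lam * sq * u - 4 * mu * U) := mul_le_mul_of_nonneg_left hmuV hmu
        _ ≤ (11 / 2 * (lam * sq)) ^ 2 := by
          rw [← hu2]; nlinarith [sq_nonneg (2 * (mu * u) - 11 / 2 * (lam * sq))]
    exact (pow_le_pow_iff_left₀ (mul_nonneg hmu hv) (by positivity) two_ne_zero).mp this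
  have hB : 5 * B ≤ 11 * sq * (u + v) := by
    have : lam * (5 * B) ≤ lam * (11 * sq * (u + v)) := by
      nlinarith [mul_le_mul_of_nonneg_right hmuv hv, mul_nonneg hmu (sq_nonneg u)]
    exact le_of_mul_le_mul_left this hlam
  have huv : 16 * u + 11 * v ≤ 20 * √(U + V) := by
    have hr := Real.sq_sqrt (add_nonneg hU hV)
    refine (pow_le_pow_iff_left₀ (by positivity) (by positivity) two_ne_zero).mp ?_
    nlinarith [sq_nonneg (12 * u - 44 / 3 * v)]
  nlinarith

end BasicInequality

theorem error_bounds_of_basic_ineq {lam mu : ℝ} {p : ℝ → ℝ} (hp : IsAmenable lam mu p)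
    (hlam : 0 < lam) (hmu : 0 ≤ mu) {ι : Type*} [Fintype ι] [DecidableEq ι] {S : Finset ι}
    {s : ℕ} (hS : #S ≤ s) {βstar : ι → ℝ} (hsupp : ∀ j ∉ S, βstar j = 0) (βhat : ι → ℝ)
    {c z : ℝ} (hc : 3 * mu / 4 < c) (hz : 4 * z ≤ lam)
    (h : c * ∑ j, (βhat j - βstar j) ^ 2
      ≤ (z + lam / 8) * ∑ j, |βhat j - βstar j| + ∑ j, p (βstar j) - ∑ j, p (βhat j)
        + mu / 2 * ∑ j, (βhat j - βstar j) ^ 2) :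
    √(∑ j, (βhat j - βstar j) ^ 2) ≤ 6 * √s * lam / (4 * c - 3 * mu) ∧
    ∑ j, |βhat j - βstar j| ≤ 4 * √s * √(∑ j, (βhat j - βstar j) ^ 2) := by
  have hpen := hp.sum_sub_sum_le hsupp βhat
  have hA : ∑ j ∈ S, |βhat j - βstar j| ≤ √s * √(∑ j ∈ S, (βhat j - βstar j) ^ 2) :=
    (sum_abs_le_sqrt_card_mul_sqrt_sum_sq S _).trans (by gcongr)
  have hzL := mul_le_mul_of_nonneg_right hz
    (sum_nonneg fun j (_ : j ∈ Finset.univ) => abs_nonneg (βhat j - βstar j))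
  rw [← sum_add_sum_compl S (fun j => |βhat j - βstar j|),
    ← sum_add_sum_compl S (fun j => (βhat j - βstar j) ^ 2)] at *
  have hM : ∀ w ∈ Icc (0 : ℝ) 1,
      c * (∑ j ∈ S, (βhat j - βstar j) ^ 2 + ∑ j ∈ Sᶜ, (βhat j - βstar j) ^ 2)
        + w * (lam * ∑ j ∈ Sᶜ, |βhat j - βstar j| - mu / 2 * ∑ j ∈ Sᶜ, (βhat j - βstar j) ^ 2)
      ≤ 3 * lam / 8 * (∑ j ∈ S, |βhat j - βstar j| + ∑ j ∈ Sᶜ, |βhat j - βstar j|)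
        + lam * ∑ j ∈ S, |βhat j - βstar j|
        + mu / 2 * (∑ j ∈ S, (βhat j - βstar j) ^ 2 + ∑ j ∈ Sᶜ, (βhat j - βstar j) ^ 2) := by
    intro w hw
    have hoff : w * (lam * ∑ j ∈ Sᶜ, |βhat j - βstar j|
        - mu / 2 * ∑ j ∈ Sᶜ, (βhat j - βstar j) ^ 2) ≤ ∑ j ∈ Sᶜ, p (βhat j - βstar j) := by
      simp only [mul_sum, ← sum_sub_distrib]
      exact sum_le_sum fun j _ => hp.mul_le hw _
    linarith
  have hU := sum_nonneg fun j (_ : j ∈ S) => sq_nonneg (βhat j - βstar j)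
  have hV := sum_nonneg fun j (_ : j ∈ Sᶜ) => sq_nonneg (βhat j - βstar j)
  exact ⟨sqrt_add_le_of_basic_ineq hlam.le hmu hc (Real.sqrt_nonneg _)
      (sum_nonneg fun _ _ => abs_nonneg _) hU hV hA hM,
    add_le_of_basic_ineq hlam hmu hc.le (Real.sqrt_nonneg _) hU hV hA hM⟩

theorem expectile_estimation_error_bounds_general
    (τ : ℝ) (hτ : τ ∈ Set.Ioo (0 : ℝ) 1)
    (lam mu : ℝ) (hlam : 0 < lam) (hmu : 0 ≤ mu)
    (p : ℝ → ℝ) (hp : IsAmenable lam mu p)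
    (d s : ℕ)
    (Sig : Matrix (Fin d) (Fin d) ℝ) (hSig : Sig.IsHermitian)
    (heig : min τ (1 - τ) * (⨅ i, hSig.eigenvalues i) > 3 * mu / 4)
    (Sighat : Matrix (Fin d) (Fin d) ℝ)
    (R : ℝ) (βstar βhat : Fin d → ℝ)
    (hRstar : ∑ j, |βstar j| ≤ R) (hRhat : ∑ j, |βhat j| ≤ R)
    (hsparse : (Finset.univ.filter fun j => βstar j ≠ 0).card ≤ s)
    (z : ℝ)
    (H1 : min τ (1 - τ) * ((βhat - βstar) ⬝ᵥ (Sighat *ᵥ (βhat - βstar)))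
        ≤ z * (∑ j, |βhat j - βstar j|)
          + (∑ j, p (βstar j)) - (∑ j, p (βhat j))
          + mu / 2 * (∑ j, (βhat j - βstar j) ^ 2))
    (H2 : lam ≥ 4 * z)
    (H3 : lam ≥ 8 * R * (⨆ i, ⨆ j, |Sighat i j - Sig i j|)) :
    Real.sqrt (∑ j, (βhat j - βstar j) ^ 2)
        ≤ 6 * Real.sqrt s * lam
            / (4 * min τ (1 - τ) * (⨅ i, hSig.eigenvalues i) - 3 * mu) ∧
    (∑ j, |βhat j - βstar j|)
        ≤ 4 * Real.sqrt s * Real.sqrt (∑ j, (βhat j - βstar j) ^ 2) := by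
  have hκ0 : 0 ≤ min τ (1 - τ) := le_min hτ.1.le (by linarith [hτ.2])
  have hκ : min τ (1 - τ) ≤ 1 / 2 := by linarith [min_le_left τ (1 - τ), min_le_right τ (1 - τ)]
  have he : ∀ i j, |Sighat i j - Sig i j| ≤ ⨆ i, ⨆ j, |Sighat i j - Sig i j| := fun i j =>
    (le_ciSup (f := fun j => |Sighat i j - Sig i j|) (Finite.bddAbove_range _) j).trans
      (le_ciSup (f := fun i => ⨆ j, |Sighat i j - Sig i j|) (Finite.bddAbove_range _) i)
  have hL : ∑ j, |(βhat - βstar) j| ≤ 2 * R :=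
    calc ∑ j, |(βhat - βstar) j| ≤ ∑ j, (|βhat j| + |βstar j|) :=
          sum_le_sum fun j _ => abs_sub (βhat j) (βstar j)
      _ ≤ 2 * R := by rw [sum_add_distrib]; linarith
  have hcurv := hSig.mul_iInf_eigenvalues_mul_sum_sq_le hκ0 hκ
    (Real.iSup_nonneg fun i => Real.iSup_nonneg fun j => abs_nonneg _) he H3 hL
  simp only [Pi.sub_apply] at hcurv
  rw [mul_assoc 4]
  exact error_bounds_of_basic_ineq hp hlam hmu hsparse (by simp) βhat heig H2 (by linarith)

/-- Deterministic core of Proposition 1: on the event where the basic inequality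
(H1) and the tuning conditions (H2)–(H3) hold, the ℓ² and ℓ¹ estimation errors of
the regularized expectile estimator satisfy
`‖Δ‖₂ ≤ 6√s λ/(4κ λ_min(Σ) − 3μ)` and `‖Δ‖₁ ≤ 4√s ‖Δ‖₂`, where `κ = min(τ,1−τ)`
and `Δ = β̂ − β*`. -/
theorem expectile_estimation_error_bounds
    (τ : ℝ) (hτ : τ ∈ Set.Ioo (0 : ℝ) 1)
    (lam mu : ℝ) (hlam : 0 < lam) (hmu : 0 ≤ mu)
    (p : ℝ → ℝ) (hp : IsAmenable lam mu p)
    (d n s : ℕ) (hn : 1 ≤ n) (hs : 1 ≤ s)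
    (Sig : Matrix (Fin d) (Fin d) ℝ) (hSig : Sig.IsHermitian)
    (heig : min τ (1 - τ) * (⨅ i, hSig.eigenvalues i) > 3 * mu / 4)
    (X : Matrix (Fin n) (Fin d) ℝ)
    (Sighat : Matrix (Fin d) (Fin d) ℝ)
    (hSighat : Sighat = (n : ℝ)⁻¹ • (Xᵀ * X))
    (R : ℝ) (βstar βhat : Fin d → ℝ)
    (hRstar : ∑ j, |βstar j| ≤ R) (hRhat : ∑ j, |βhat j| ≤ R)
    (hsparse : (Finset.univ.filter fun j => βstar j ≠ 0).card ≤ s)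
    (z : ℝ) (hz : 0 ≤ z)
    (H1 : min τ (1 - τ) * ((βhat - βstar) ⬝ᵥ (Sighat *ᵥ (βhat - βstar)))
        ≤ z * (∑ j, |βhat j - βstar j|)
          + (∑ j, p (βstar j)) - (∑ j, p (βhat j))
          + mu / 2 * (∑ j, (βhat j - βstar j) ^ 2))
    (H2 : lam ≥ 4 * z)
    (H3 : lam ≥ 8 * R * (⨆ i, ⨆ j, |Sighat i j - Sig i j|)) :
    Real.sqrt (∑ j, (βhat j - βstar j) ^ 2)
        ≤ 6 * Real.sqrt s * lam
            / (4 * min τ (1 - τ) * (⨅ i, hSig.eigenvalues i) - 3 * mu) ∧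
    (∑ j, |βhat j - βstar j|)
        ≤ 4 * Real.sqrt s * Real.sqrt (∑ j, (βhat j - βstar j) ^ 2) :=
  expectile_estimation_error_bounds_general τ hτ lam mu hlam hmu p hp d s Sig hSig heig Sighat R
    βstar βhat hRstar hRhat hsparse z H1 H2 H3
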